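/- Let S be the set of skew-symmetric matrix polynomials in P_m(ℂ^{n×n}) and let P ∈ S be regular. Let λ ∈ ℂ and x ∈ ℂⁿ with x^H x = 1, and set r := −P(λ)x and Λ_m := (1, λ, …, λ^m)ᵀ. Then η_F^S(λ, x, P) = √2 · η(λ, x, P) and η_2^S(λ, x, P) = η(λ, x, P) = ‖r‖₂/‖Λ_m‖₂. Moreover, the skew-symmetric polynomial ΔP(z) := Σ_{j=0}^m z^j ΔA_j with ΔA_j := −(conj(λ^j)/‖Λ_m‖₂²)·(x̄ rᵀ − r x^H) satisfies P(λ)x + ΔP(λ)x = 0, |||ΔP|||_F = η_F^S(λ, x, P), and |||ΔP|||₂ = η_2^S(λ, x, P). -/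

import Mathlib

open scoped ComplexConjugate
open Matrix

noncomputable section

variable {ι : Type*} [Fintype ι] [DecidableEq ι]

/-- Evaluation of the matrix polynomial with coefficient list `A` at the point `z`. -/
def polyEval {m : ℕ} (A : Fin (m+1) → Matrix ι ι ℂ) (z : ℂ) : Matrix ι ι ℂ :=
  ∑ j : Fin (m+1), z ^ (j : ℕ) • A j

/-- Squared Euclidean norm of a complex vector. -/
def vecNormSq (x : ι → ℂ) : ℝ := ∑ i, ‖x i‖ ^ 2

/-- Euclidean norm of a complex vector. -/
def vecNorm (x : ι → ℂ) : ℝ := Real.sqrt (vecNormSq x)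

/-- `‖(1, z, …, z^m)‖₂²`. -/
def lamNormSq (m : ℕ) (z : ℂ) : ℝ := ∑ j : Fin (m+1), ‖z ^ (j : ℕ)‖ ^ 2

/-- Squared Frobenius norm of a matrix. -/
def frobNormSq (M : Matrix ι ι ℂ) : ℝ := ∑ i, ∑ k, ‖M i k‖ ^ 2

/-- Spectral (operator 2-) norm of a matrix. -/
def specNorm (M : Matrix ι ι ℂ) : ℝ := ‖Matrix.toEuclideanCLM (𝕜 := ℂ) M‖

/-- Frobenius norm of a matrix polynomial: `(Σ_j ‖A_j‖_F²)^{1/2}`. -/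
def polyNormF {m : ℕ} (A : Fin (m+1) → Matrix ι ι ℂ) : ℝ :=
  Real.sqrt (∑ j, frobNormSq (A j))

/-- Spectral norm of a matrix polynomial: `(Σ_j ‖A_j‖₂²)^{1/2}`. -/
def polyNorm2 {m : ℕ} (A : Fin (m+1) → Matrix ι ι ℂ) : ℝ :=
  Real.sqrt (∑ j, specNorm (A j) ^ 2)

/-- Structured backward error of `(lam, x)` as an approximate eigenpair of the matrix
polynomial `A`, with respect to the polynomial norm `N` and the structure class `S`. -/
def eta {m : ℕ} (N : (Fin (m+1) → Matrix ι ι ℂ) → ℝ)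
    (S : Set (Fin (m+1) → Matrix ι ι ℂ)) (lam : ℂ) (x : ι → ℂ)
    (A : Fin (m+1) → Matrix ι ι ℂ) : ℝ :=
  sInf {t | ∃ ΔA ∈ S, (polyEval A lam + polyEval ΔA lam) *ᵥ x = 0 ∧ t = N ΔA}

/-- A matrix polynomial is regular if `det P(z) ≠ 0` for some `z`. -/
def Regular {m : ℕ} (A : Fin (m+1) → Matrix ι ι ℂ) : Prop :=
  ∃ z : ℂ, (polyEval A z).det ≠ 0


/-- The class of skew-symmetric matrix polynomials. -/
def SkewSymPoly {ι : Type*} [Fintype ι] [DecidableEq ι] {m : ℕ} :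
    Set (Fin (m+1) → Matrix ι ι ℂ) := {B | ∀ j, (B j)ᵀ = -(B j)}

/-!
Put `K = x̄ rᵀ - r xᴴ`. Since `P(λ)` is skew-symmetric, `xᵀ r = -xᵀ P(λ) x = 0`, i.e.
`x̄ ⊥ r`. Hence `K` is skew-symmetric with `K x = -r`, `‖K‖₂ = ‖r‖` and `‖K‖_F = √2 ‖r‖`, and
distributing `-K` over the coefficients with the minimal-norm weights `conj (λ^j) / ‖Λ_m‖²`
gives `ΔP` with `ΔP(λ) = -K`, `|||ΔP|||₂ = ‖r‖ / ‖Λ_m‖` and `|||ΔP|||_F = √2 ‖r‖ / ‖Λ_m‖`.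

For the lower bounds let `ΔP(λ) x = r`. Cauchy–Schwarz over the coefficients gives
`‖ΔP(λ)‖ ≤ ‖Λ_m‖ |||ΔP|||` for both norms, hence `‖r‖ ≤ ‖Λ_m‖ |||ΔP|||`. If `ΔP` is
skew-symmetric, so is `S = ΔP(λ)`, and then `xᵀ S r̄ = -rᵀ r̄ = -‖r‖²` forces `‖S r̄‖ ≥ ‖r‖²`;
Bessel's inequality for the orthogonal pair `x, r̄` applied to the rows of `S` gives
`‖S‖_F² ≥ ‖S x‖² + ‖S r̄‖² / ‖r‖² ≥ 2 ‖r‖²`.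
-/

open WithLp (toLp)

lemma norm_sum_mul_sq_le {κ R : Type*} [SeminormedRing R] (s : Finset κ) (f g : κ → R) :
    ‖∑ k ∈ s, f k * g k‖ ^ 2 ≤ (∑ k ∈ s, ‖f k‖ ^ 2) * ∑ k ∈ s, ‖g k‖ ^ 2 :=
  calc ‖∑ k ∈ s, f k * g k‖ ^ 2 ≤ (∑ k ∈ s, ‖f k‖ * ‖g k‖) ^ 2 := by
        gcongr; exact (norm_sum_le _ _).trans (Finset.sum_le_sum fun k _ => norm_mul_le _ _)
    _ ≤ _ := Finset.sum_mul_sq_le_sq_mul_sq _ _ _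

/-- Bessel's inequality for the orthonormal pair `u, w / ‖w‖`, multiplied by `‖w‖ ^ 2` so that
`w = 0` is allowed. -/
lemma norm_inner_sq_add_norm_sq_mul_norm_inner_sq_le {𝕜 E : Type*} [RCLike 𝕜] [NormedAddCommGroup E]
    [InnerProductSpace 𝕜 E] {u w : E} (hu : ‖u‖ = 1) (huw : inner 𝕜 u w = 0) (v : E) :
    ‖inner 𝕜 w v‖ ^ 2 + ‖w‖ ^ 2 * ‖inner 𝕜 u v‖ ^ 2 ≤ ‖w‖ ^ 2 * ‖v‖ ^ 2 := by
  set c := inner 𝕜 u v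
  have hwu : inner 𝕜 w u = 0 := by rw [← inner_conj_symm, huw, map_zero]
  have hproj : inner 𝕜 w (v - c • u) = inner 𝕜 w v := by
    rw [inner_sub_right, inner_smul_right, hwu, mul_zero, sub_zero]
  have hpyth : ‖v - c • u‖ ^ 2 = ‖v‖ ^ 2 - ‖c‖ ^ 2 := by
    rw [@norm_sub_sq 𝕜, inner_smul_right, ← inner_conj_symm, RCLike.mul_conj, norm_smul, hu]
    norm_cast
    ring
  have hcs := norm_inner_le_norm (𝕜 := 𝕜) w (v - c • u)
  rw [hproj] at hcs
  nlinarith [pow_le_pow_left₀ (norm_nonneg _) hcs 2]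

section Vectors

variable {n : Type*} [Fintype n]

lemma vecNormSq_eq_norm_sq (v : n → ℂ) : vecNormSq v = ‖toLp 2 v‖ ^ 2 :=
  (EuclideanSpace.norm_sq_eq _).symm

lemma vecNorm_eq_norm (v : n → ℂ) : vecNorm v = ‖toLp 2 v‖ := by
  rw [vecNorm, vecNormSq_eq_norm_sq, Real.sqrt_sq (norm_nonneg _)]

lemma vecNormSq_nonneg (v : n → ℂ) : 0 ≤ vecNormSq v := by
  rw [vecNormSq_eq_norm_sq]; positivity

lemma vecNormSq_star (v : n → ℂ) : vecNormSq (star v) = vecNormSq v := by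
  simp [vecNormSq]

lemma vecNormSq_neg (v : n → ℂ) : vecNormSq (-v) = vecNormSq v := by
  simp [vecNormSq]

lemma dotProduct_star_self_eq (v : n → ℂ) : v ⬝ᵥ star v = (vecNormSq v : ℂ) := by
  rw [← EuclideanSpace.inner_toLp_toLp, inner_self_eq_norm_sq_to_K, vecNormSq_eq_norm_sq]
  push_cast; rfl

lemma vecNormSq_eq_one {x : n → ℂ} (hx : star x ⬝ᵥ x = 1) : vecNormSq x = 1 := by
  rw [dotProduct_comm, dotProduct_star_self_eq] at hx
  exact_mod_cast hx

lemma norm_toLp_eq_one {x : n → ℂ} (hx : star x ⬝ᵥ x = 1) : ‖toLp 2 x‖ = 1 := by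
  refine (pow_eq_one_iff_of_nonneg (norm_nonneg _) two_ne_zero).mp ?_
  rw [← vecNormSq_eq_norm_sq, vecNormSq_eq_one hx]

lemma vecNorm_eq_one {x : n → ℂ} (hx : star x ⬝ᵥ x = 1) : vecNorm x = 1 := by
  rw [vecNorm, vecNormSq_eq_one hx, Real.sqrt_one]

lemma norm_dotProduct_sq_le (u v : n → ℂ) : ‖u ⬝ᵥ v‖ ^ 2 ≤ vecNormSq u * vecNormSq v :=
  norm_sum_mul_sq_le _ _ _

end Vectors

section SkewMatrices

variable {n R : Type*} [CommRing R]

lemma transpose_vecMulVec_sub_vecMulVec (u v : n → R) :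
    (vecMulVec u v - vecMulVec v u)ᵀ = -(vecMulVec u v - vecMulVec v u) := by
  rw [transpose_sub, transpose_vecMulVec, transpose_vecMulVec, neg_sub]

variable [Fintype n]

lemma vecMulVec_sub_vecMulVec_mulVec (u v w : n → R) :
    (vecMulVec u v - vecMulVec v u) *ᵥ w = (v ⬝ᵥ w) • u - (u ⬝ᵥ w) • v := by
  simp only [sub_mulVec, vecMulVec_mulVec, op_smul_eq_smul]

lemma dotProduct_mulVec_self_eq_zero [IsAddTorsionFree R] {S : Matrix n n R} (hS : Sᵀ = -S)
    (v : n → R) : v ⬝ᵥ (S *ᵥ v) = 0 := by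
  refine self_eq_neg.mp ?_
  calc v ⬝ᵥ (S *ᵥ v) = (Sᵀ *ᵥ v) ⬝ᵥ v := by rw [dotProduct_mulVec, mulVec_transpose]
    _ = -(v ⬝ᵥ (S *ᵥ v)) := by rw [hS, neg_mulVec, neg_dotProduct, dotProduct_comm]

end SkewMatrices

section Frobenius

variable {n : Type*} [Fintype n]

lemma frobNormSq_nonneg (M : Matrix n n ℂ) : 0 ≤ frobNormSq M := by
  unfold frobNormSq; positivity

lemma frobNormSq_smul (c : ℂ) (M : Matrix n n ℂ) :
    frobNormSq (c • M) = ‖c‖ ^ 2 * frobNormSq M := by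
  simp [frobNormSq, mul_pow, Finset.mul_sum]

lemma frobNormSq_neg (M : Matrix n n ℂ) : frobNormSq (-M) = frobNormSq M := by
  simp [frobNormSq]

lemma frobNormSq_vecMulVec (u v : n → ℂ) :
    frobNormSq (vecMulVec u v) = vecNormSq u * vecNormSq v := by
  simp [frobNormSq, vecNormSq, vecMulVec_apply, mul_pow, Finset.sum_mul_sum]

lemma vecNormSq_mulVec_le (M : Matrix n n ℂ) (v : n → ℂ) :
    vecNormSq (M *ᵥ v) ≤ frobNormSq M * vecNormSq v := by
  rw [frobNormSq, Finset.sum_mul]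
  exact Finset.sum_le_sum fun i _ => norm_dotProduct_sq_le (M i) v

lemma vecNormSq_mulVec_add_le_frobNormSq {u w : n → ℂ} (hu : star u ⬝ᵥ u = 1)
    (huw : star u ⬝ᵥ w = 0) (M : Matrix n n ℂ) :
    vecNormSq (M *ᵥ w) + vecNormSq w * vecNormSq (M *ᵥ u) ≤ vecNormSq w * frobNormSq M := by
  have hrow (i : n) : ‖M i ⬝ᵥ w‖ ^ 2 + vecNormSq w * ‖M i ⬝ᵥ u‖ ^ 2 ≤
      vecNormSq w * vecNormSq (M i) := by
    have h := norm_inner_sq_add_norm_sq_mul_norm_inner_sq_le (norm_toLp_eq_one hu)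
      (by rwa [EuclideanSpace.inner_toLp_toLp, dotProduct_comm]) (toLp 2 (star (M i)))
    simpa only [EuclideanSpace.inner_toLp_toLp, star_dotProduct_star, norm_star,
      ← vecNormSq_eq_norm_sq, vecNormSq_star, dotProduct_comm _ (M i)] using h
  have hsum := Finset.sum_le_sum fun i (_ : i ∈ Finset.univ) => hrow i
  rw [Finset.sum_add_distrib, ← Finset.mul_sum, ← Finset.mul_sum] at hsum
  exact hsum

lemma two_mul_vecNormSq_mulVec_le_frobNormSq {S : Matrix n n ℂ} (hS : Sᵀ = -S) {x : n → ℂ}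
    (hx : star x ⬝ᵥ x = 1) : 2 * vecNormSq (S *ᵥ x) ≤ frobNormSq S := by
  set r := S *ᵥ x
  have hxr : star x ⬝ᵥ star r = 0 := by
    rw [star_dotProduct_star, dotProduct_comm, dotProduct_mulVec_self_eq_zero hS, star_zero]
  have hbessel := vecNormSq_mulVec_add_le_frobNormSq hx hxr S
  rw [vecNormSq_star] at hbessel
  have hSr : vecNormSq r ^ 2 ≤ vecNormSq (S *ᵥ star r) := by
    have hdot : x ⬝ᵥ (S *ᵥ star r) = -(vecNormSq r : ℂ) := by
      rw [dotProduct_mulVec, ← mulVec_transpose, hS, neg_mulVec, neg_dotProduct,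
        dotProduct_star_self_eq]
    have hcs := norm_dotProduct_sq_le x (S *ᵥ star r)
    rwa [hdot, norm_neg, Complex.norm_real, Real.norm_of_nonneg (vecNormSq_nonneg r),
      vecNormSq_eq_one hx, one_mul] at hcs
  rcases (vecNormSq_nonneg r).eq_or_lt with h0 | hpos
  · rw [← h0, mul_zero]; exact frobNormSq_nonneg S
  · nlinarith

end Frobenius

section Spectral

open scoped Matrix.Norms.L2Operator

variable {n : Type*} [Fintype n] [DecidableEq n]

lemma specNorm_nonneg (M : Matrix n n ℂ) : 0 ≤ specNorm M :=
  norm_nonneg M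

lemma vecNorm_mulVec_le_specNorm_mul (M : Matrix n n ℂ) (v : n → ℂ) :
    vecNorm (M *ᵥ v) ≤ specNorm M * vecNorm v := by
  have h := (toEuclideanCLM (𝕜 := ℂ) M).le_opNorm (toLp 2 v)
  rwa [toEuclideanCLM_toLp, ← vecNorm_eq_norm, ← vecNorm_eq_norm] at h

lemma specNorm_le {M : Matrix n n ℂ} {c : ℝ} (hc : 0 ≤ c)
    (h : ∀ v, vecNorm (M *ᵥ v) ≤ c * vecNorm v) : specNorm M ≤ c :=
  ContinuousLinearMap.opNorm_le_bound _ hc fun v => by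
    simpa only [vecNorm_eq_norm, WithLp.toLp_ofLp, ← toEuclideanCLM_toLp] using h v.ofLp

lemma specNorm_smul (c : ℂ) (M : Matrix n n ℂ) : specNorm (c • M) = ‖c‖ * specNorm M :=
  norm_smul c M

lemma specNorm_neg (M : Matrix n n ℂ) : specNorm (-M) = specNorm M :=
  norm_neg M

end Spectral

section SkewOuterProduct

variable {n : Type*} [Fintype n] {x r : n → ℂ}

lemma vecNormSq_smul_star_sub_smul (hx : star x ⬝ᵥ x = 1) (hxr : x ⬝ᵥ r = 0) (a b : ℂ) :
    vecNormSq (a • star x - b • r) = ‖a‖ ^ 2 + ‖b‖ ^ 2 * vecNormSq r := by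
  have horth : inner ℂ (toLp 2 (star x)) (toLp 2 r) = 0 := by
    rw [EuclideanSpace.inner_toLp_toLp, star_star, dotProduct_comm, hxr]
  rw [vecNormSq_eq_norm_sq, WithLp.toLp_sub, WithLp.toLp_smul, WithLp.toLp_smul, @norm_sub_sq ℂ,
    inner_smul_left, inner_smul_right, horth, norm_smul, norm_smul, mul_pow, mul_pow,
    ← vecNormSq_eq_norm_sq, ← vecNormSq_eq_norm_sq, vecNormSq_star, vecNormSq_eq_one hx]
  simp

lemma vecNormSq_vecMulVec_sub_vecMulVec_mulVec_le (hx : star x ⬝ᵥ x = 1) (hxr : x ⬝ᵥ r = 0)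
    (v : n → ℂ) : vecNormSq ((vecMulVec (star x) r - vecMulVec r (star x)) *ᵥ v) ≤
      vecNormSq r * vecNormSq v := by
  have horth : inner ℂ (toLp 2 x) (toLp 2 (star r)) = 0 := by
    rw [EuclideanSpace.inner_toLp_toLp, star_dotProduct_star, hxr, star_zero]
  have h := norm_inner_sq_add_norm_sq_mul_norm_inner_sq_le (norm_toLp_eq_one hx) horth (toLp 2 v)
  rw [EuclideanSpace.inner_toLp_toLp, EuclideanSpace.inner_toLp_toLp, star_star,
    ← vecNormSq_eq_norm_sq, ← vecNormSq_eq_norm_sq, vecNormSq_star, dotProduct_comm v,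
    dotProduct_comm v] at h
  rw [vecMulVec_sub_vecMulVec_mulVec, vecNormSq_smul_star_sub_smul hx hxr]
  linarith

lemma vecMulVec_sub_vecMulVec_mulVec_self (hx : star x ⬝ᵥ x = 1) (hxr : x ⬝ᵥ r = 0) :
    (vecMulVec (star x) r - vecMulVec r (star x)) *ᵥ x = -r := by
  rw [vecMulVec_sub_vecMulVec_mulVec, dotProduct_comm, hxr, hx, zero_smul, one_smul, zero_sub]

lemma frobNormSq_vecMulVec_sub_vecMulVec (hx : star x ⬝ᵥ x = 1) (hxr : x ⬝ᵥ r = 0) :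
    frobNormSq (vecMulVec (star x) r - vecMulVec r (star x)) = 2 * vecNormSq r := by
  have hrow (i : n) : vecNormSq ((vecMulVec (star x) r - vecMulVec r (star x)) i) =
      ‖r i‖ ^ 2 + ‖x i‖ ^ 2 * vecNormSq r := by
    have hi : (vecMulVec (star x) r - vecMulVec r (star x)) i = -(r i • star x - star x i • r) := by
      ext k
      simp only [Matrix.sub_apply, vecMulVec_apply, Pi.neg_apply, Pi.sub_apply, Pi.smul_apply,
        smul_eq_mul]
      ring
    rw [hi, vecNormSq_neg, vecNormSq_smul_star_sub_smul hx hxr, Pi.star_apply, norm_star]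
  calc frobNormSq (vecMulVec (star x) r - vecMulVec r (star x))
      = ∑ i, (‖r i‖ ^ 2 + ‖x i‖ ^ 2 * vecNormSq r) := Finset.sum_congr rfl fun i _ => hrow i
    _ = vecNormSq r + vecNormSq x * vecNormSq r := by
      rw [Finset.sum_add_distrib, ← Finset.sum_mul]; rfl
    _ = 2 * vecNormSq r := by rw [vecNormSq_eq_one hx]; ring

lemma specNorm_vecMulVec_sub_vecMulVec [DecidableEq n] (hx : star x ⬝ᵥ x = 1) (hxr : x ⬝ᵥ r = 0) :
    specNorm (vecMulVec (star x) r - vecMulVec r (star x)) = vecNorm r := by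
  refine le_antisymm (specNorm_le (Real.sqrt_nonneg _) fun v => ?_) ?_
  · rw [vecNorm, vecNorm, vecNorm, ← Real.sqrt_mul (vecNormSq_nonneg r)]
    exact Real.sqrt_le_sqrt (vecNormSq_vecMulVec_sub_vecMulVec_mulVec_le hx hxr v)
  · have h := vecNorm_mulVec_le_specNorm_mul (vecMulVec (star x) r - vecMulVec r (star x)) x
    rwa [vecMulVec_sub_vecMulVec_mulVec_self hx hxr, vecNorm, vecNormSq_neg, vecNorm_eq_one hx,
      mul_one] at h

end SkewOuterProduct

lemma one_le_lamNormSq (m : ℕ) (z : ℂ) : 1 ≤ lamNormSq m z := by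
  refine le_trans (le_of_eq ?_) (Finset.single_le_sum (f := fun j : Fin (m+1) => ‖z ^ (j : ℕ)‖ ^ 2)
    (fun j _ => by positivity) (Finset.mem_univ 0))
  simp

lemma lamNormSq_pos (m : ℕ) (z : ℂ) : 0 < lamNormSq m z :=
  one_pos.trans_le (one_le_lamNormSq m z)

/-- The minimal-norm solution `c` of `∑ j, z ^ j * c j = 1`. -/
def minNormCoeff (m : ℕ) (z : ℂ) (j : Fin (m+1)) : ℂ := conj (z ^ (j : ℕ)) / lamNormSq m z

lemma sum_pow_mul_minNormCoeff (m : ℕ) (z : ℂ) :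
    ∑ j : Fin (m+1), z ^ (j : ℕ) * minNormCoeff m z j = 1 := by
  have hL : (lamNormSq m z : ℂ) ≠ 0 := Complex.ofReal_ne_zero.mpr (lamNormSq_pos m z).ne'
  simp only [minNormCoeff, mul_div_assoc', ← Finset.sum_div, Complex.mul_conj,
    Complex.normSq_eq_norm_sq]
  rw [div_eq_one_iff_eq hL, lamNormSq]
  push_cast
  rfl

lemma sum_norm_minNormCoeff_sq (m : ℕ) (z : ℂ) :
    ∑ j : Fin (m+1), ‖minNormCoeff m z j‖ ^ 2 = (lamNormSq m z)⁻¹ := by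
  have hL := lamNormSq_pos m z
  simp only [minNormCoeff, norm_div, Complex.norm_conj, Complex.norm_real,
    Real.norm_of_nonneg hL.le, div_pow, ← Finset.sum_div]
  rw [← lamNormSq]
  field_simp

section Polynomials

variable {n : Type*} {m : ℕ}

lemma polyEval_minNormCoeff_smul (M : Matrix n n ℂ) (z : ℂ) :
    polyEval (fun j => minNormCoeff m z j • M) z = M := by
  simp only [polyEval, smul_smul, ← Finset.sum_smul, sum_pow_mul_minNormCoeff, one_smul]

variable [Fintype n]

lemma polyNormF_minNormCoeff_smul (M : Matrix n n ℂ) (z : ℂ) :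
    polyNormF (fun j => minNormCoeff m z j • M) = √(frobNormSq M) / √(lamNormSq m z) := by
  simp only [polyNormF, frobNormSq_smul, ← Finset.sum_mul, sum_norm_minNormCoeff_sq]
  rw [Real.sqrt_mul (inv_nonneg.mpr (lamNormSq_pos m z).le), Real.sqrt_inv, inv_mul_eq_div]

lemma frobNormSq_polyEval_le (B : Fin (m+1) → Matrix n n ℂ) (z : ℂ) :
    frobNormSq (polyEval B z) ≤ lamNormSq m z * ∑ j, frobNormSq (B j) := by
  have hentry (i k : n) : ‖polyEval B z i k‖ ^ 2 ≤ lamNormSq m z * ∑ j, ‖B j i k‖ ^ 2 := by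
    simpa [polyEval, Matrix.sum_apply, lamNormSq] using
      norm_sum_mul_sq_le Finset.univ (fun j : Fin (m+1) => z ^ (j : ℕ)) (fun j => B j i k)
  calc frobNormSq (polyEval B z) ≤ ∑ i, ∑ k, lamNormSq m z * ∑ j, ‖B j i k‖ ^ 2 :=
        Finset.sum_le_sum fun i _ => Finset.sum_le_sum fun k _ => hentry i k
    _ = lamNormSq m z * ∑ j, frobNormSq (B j) := by
      simp only [frobNormSq, ← Finset.mul_sum]
      exact congrArg _ ((Finset.sum_congr rfl fun i _ => Finset.sum_comm).trans Finset.sum_comm)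

variable [DecidableEq n]

lemma transpose_polyEval {B : Fin (m+1) → Matrix n n ℂ} (hB : B ∈ SkewSymPoly) (z : ℂ) :
    (polyEval B z)ᵀ = -polyEval B z := by
  have hB' : ∀ j, (B j)ᵀ = -B j := hB
  simp only [polyEval, transpose_sum, transpose_smul, hB', smul_neg, Finset.sum_neg_distrib]

lemma polyNorm2_minNormCoeff_smul (M : Matrix n n ℂ) (z : ℂ) :
    polyNorm2 (fun j => minNormCoeff m z j • M) = specNorm M / √(lamNormSq m z) := by
  simp only [polyNorm2, specNorm_smul, mul_pow, ← Finset.sum_mul, sum_norm_minNormCoeff_sq]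
  rw [Real.sqrt_mul (inv_nonneg.mpr (lamNormSq_pos m z).le), Real.sqrt_inv,
    Real.sqrt_sq (specNorm_nonneg M), inv_mul_eq_div]

open scoped Matrix.Norms.L2Operator in
lemma specNorm_polyEval_le (B : Fin (m+1) → Matrix n n ℂ) (z : ℂ) :
    specNorm (polyEval B z) ≤ √(lamNormSq m z) * polyNorm2 B :=
  calc specNorm (polyEval B z) ≤ ∑ j : Fin (m+1), ‖z ^ (j : ℕ)‖ * specNorm (B j) :=
        (norm_sum_le _ _).trans_eq (Finset.sum_congr rfl fun j _ => norm_smul _ (B j))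
    _ ≤ _ := Real.sum_mul_le_sqrt_mul_sqrt _ _ _

end Polynomials

section BackwardError

variable {n : Type*} [Fintype n] {m : ℕ} {x : n → ℂ}

lemma vecNorm_polyEval_mulVec_div_le_polyNormF (B : Fin (m+1) → Matrix n n ℂ) (z : ℂ)
    (hx : star x ⬝ᵥ x = 1) : vecNorm (polyEval B z *ᵥ x) / √(lamNormSq m z) ≤ polyNormF B := by
  rw [div_le_iff₀' (Real.sqrt_pos.mpr (lamNormSq_pos m z)), polyNormF,
    ← Real.sqrt_mul (lamNormSq_pos m z).le, vecNorm]
  refine Real.sqrt_le_sqrt ((vecNormSq_mulVec_le _ x).trans ?_)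
  rw [vecNormSq_eq_one hx, mul_one]
  exact frobNormSq_polyEval_le B z

lemma sqrt_two_mul_vecNorm_polyEval_mulVec_div_le_polyNormF [DecidableEq n]
    {B : Fin (m+1) → Matrix n n ℂ} (hB : B ∈ SkewSymPoly) (z : ℂ) (hx : star x ⬝ᵥ x = 1) :
    √2 * vecNorm (polyEval B z *ᵥ x) / √(lamNormSq m z) ≤ polyNormF B := by
  rw [div_le_iff₀' (Real.sqrt_pos.mpr (lamNormSq_pos m z)), polyNormF,
    ← Real.sqrt_mul (lamNormSq_pos m z).le, vecNorm, ← Real.sqrt_mul zero_le_two]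
  exact Real.sqrt_le_sqrt ((two_mul_vecNormSq_mulVec_le_frobNormSq (transpose_polyEval hB z)
    hx).trans (frobNormSq_polyEval_le B z))

lemma vecNorm_polyEval_mulVec_div_le_polyNorm2 [DecidableEq n] (B : Fin (m+1) → Matrix n n ℂ)
    (z : ℂ) (hx : star x ⬝ᵥ x = 1) :
    vecNorm (polyEval B z *ᵥ x) / √(lamNormSq m z) ≤ polyNorm2 B := by
  rw [div_le_iff₀' (Real.sqrt_pos.mpr (lamNormSq_pos m z))]
  calc vecNorm (polyEval B z *ᵥ x) ≤ specNorm (polyEval B z) * vecNorm x :=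
        vecNorm_mulVec_le_specNorm_mul _ x
    _ ≤ √(lamNormSq m z) * polyNorm2 B := by
      rw [vecNorm_eq_one hx, mul_one]
      exact specNorm_polyEval_le B z

variable {N : (Fin (m+1) → Matrix n n ℂ) → ℝ} {S : Set (Fin (m+1) → Matrix n n ℂ)} {z : ℂ}
  {A ΔA : Fin (m+1) → Matrix n n ℂ} {r : n → ℂ}

lemma eta_eq_of_forall_le (hr : r = -(polyEval A z *ᵥ x)) (hS : ΔA ∈ S)
    (hsol : polyEval ΔA z *ᵥ x = r) (hmin : ∀ ΔB ∈ S, polyEval ΔB z *ᵥ x = r → N ΔA ≤ N ΔB) :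
    eta N S z x A = N ΔA := by
  have hiff (ΔB : Fin (m+1) → Matrix n n ℂ) :
      (polyEval A z + polyEval ΔB z) *ᵥ x = 0 ↔ polyEval ΔB z *ᵥ x = r := by
    rw [add_mulVec, hr, add_eq_zero_iff_neg_eq, eq_comm]
  refine IsLeast.csInf_eq ⟨⟨ΔA, hS, (hiff ΔA).mpr hsol, rfl⟩, ?_⟩
  rintro _ ⟨ΔB, hB, hsolB, rfl⟩
  exact hmin ΔB hB ((hiff ΔB).mp hsolB)

lemma eta_polyNormF_univ (hx : star x ⬝ᵥ x = 1) (hr : r = -(polyEval A z *ᵥ x)) :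
    eta polyNormF Set.univ z x A = vecNorm r / √(lamNormSq m z) := by
  have hnorm : polyNormF (fun j => minNormCoeff m z j • vecMulVec r (star x)) =
      vecNorm r / √(lamNormSq m z) := by
    rw [polyNormF_minNormCoeff_smul, frobNormSq_vecMulVec, vecNormSq_star, vecNormSq_eq_one hx,
      mul_one, vecNorm]
  refine hnorm ▸ eta_eq_of_forall_le hr trivial ?_ fun ΔB _ h => ?_
  · rw [polyEval_minNormCoeff_smul, vecMulVec_mulVec, hx, op_smul_eq_smul, one_smul]
  · rw [hnorm, ← h]
    exact vecNorm_polyEval_mulVec_div_le_polyNormF ΔB z hx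

variable [DecidableEq n]

lemma eta_polyNorm2_of_mem (hx : star x ⬝ᵥ x = 1) (hr : r = -(polyEval A z *ᵥ x))
    (hS : ΔA ∈ S) (hsol : polyEval ΔA z *ᵥ x = r)
    (hnorm : polyNorm2 ΔA = vecNorm r / √(lamNormSq m z)) :
    eta polyNorm2 S z x A = vecNorm r / √(lamNormSq m z) :=
  hnorm ▸ eta_eq_of_forall_le hr hS hsol fun ΔB _ h => by
    rw [hnorm, ← h]
    exact vecNorm_polyEval_mulVec_div_le_polyNorm2 ΔB z hx

lemma eta_polyNormF_skewSymPoly_of_mem (hx : star x ⬝ᵥ x = 1) (hr : r = -(polyEval A z *ᵥ x))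
    (hS : ΔA ∈ SkewSymPoly) (hsol : polyEval ΔA z *ᵥ x = r)
    (hnorm : polyNormF ΔA = √2 * vecNorm r / √(lamNormSq m z)) :
    eta polyNormF SkewSymPoly z x A = √2 * vecNorm r / √(lamNormSq m z) :=
  hnorm ▸ eta_eq_of_forall_le hr hS hsol fun ΔB hB h => by
    rw [hnorm, ← h]
    exact sqrt_two_mul_vecNorm_polyEval_mulVec_div_le_polyNormF hB z hx

end BackwardError

section SkewPerturbation

variable {n : Type*} [Fintype n] {m : ℕ} {x r : n → ℂ}

def skewPerturbation (m : ℕ) (z : ℂ) (x r : n → ℂ) : Fin (m+1) → Matrix n n ℂ :=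
  fun j => minNormCoeff m z j • -(vecMulVec (star x) r - vecMulVec r (star x))

lemma skewPerturbation_mem_skewSymPoly [DecidableEq n] (z : ℂ) :
    skewPerturbation m z x r ∈ SkewSymPoly := fun j => by
  rw [skewPerturbation, transpose_smul, transpose_neg, transpose_vecMulVec_sub_vecMulVec, smul_neg]

lemma polyEval_skewPerturbation_mulVec (hx : star x ⬝ᵥ x = 1) (hxr : x ⬝ᵥ r = 0) (z : ℂ) :
    polyEval (skewPerturbation m z x r) z *ᵥ x = r := by
  unfold skewPerturbation
  rw [polyEval_minNormCoeff_smul, neg_mulVec, vecMulVec_sub_vecMulVec_mulVec_self hx hxr, neg_neg]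

lemma polyNormF_skewPerturbation (hx : star x ⬝ᵥ x = 1) (hxr : x ⬝ᵥ r = 0) (z : ℂ) :
    polyNormF (skewPerturbation m z x r) = √2 * vecNorm r / √(lamNormSq m z) := by
  unfold skewPerturbation
  rw [polyNormF_minNormCoeff_smul, frobNormSq_neg,
    frobNormSq_vecMulVec_sub_vecMulVec hx hxr, Real.sqrt_mul zero_le_two, vecNorm]

lemma polyNorm2_skewPerturbation [DecidableEq n] (hx : star x ⬝ᵥ x = 1) (hxr : x ⬝ᵥ r = 0)
    (z : ℂ) : polyNorm2 (skewPerturbation m z x r) = vecNorm r / √(lamNormSq m z) := by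
  unfold skewPerturbation
  rw [polyNorm2_minNormCoeff_smul, specNorm_neg, specNorm_vecMulVec_sub_vecMulVec hx hxr]

end SkewPerturbation

theorem skewsymmetric_backward_error_general {n m : ℕ}
    (A : Fin (m+1) → Matrix (Fin n) (Fin n) ℂ)
    (hA : A ∈ SkewSymPoly)
    (lam : ℂ) (x : Fin n → ℂ) (hx : star x ⬝ᵥ x = 1)
    (r : Fin n → ℂ) (hr : r = -(polyEval A lam *ᵥ x))
    (ΔA : Fin (m+1) → Matrix (Fin n) (Fin n) ℂ)
    (hΔ : ∀ j : Fin (m+1),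
      ΔA j = -((conj (lam ^ (j : ℕ)) / (lamNormSq m lam : ℂ)) •
        (vecMulVec (star x) r - vecMulVec r (star x)))) :
    eta polyNormF SkewSymPoly lam x A = Real.sqrt 2 * eta polyNormF Set.univ lam x A ∧
    eta polyNorm2 SkewSymPoly lam x A = eta polyNorm2 Set.univ lam x A ∧
    eta polyNorm2 Set.univ lam x A = vecNorm r / Real.sqrt (lamNormSq m lam) ∧
    ΔA ∈ SkewSymPoly ∧
    (polyEval A lam + polyEval ΔA lam) *ᵥ x = 0 ∧
    polyNormF ΔA = eta polyNormF SkewSymPoly lam x A ∧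
    polyNorm2 ΔA = eta polyNorm2 SkewSymPoly lam x A := by
  have hxr : x ⬝ᵥ r = 0 := by
    rw [hr, dotProduct_neg, dotProduct_mulVec_self_eq_zero (transpose_polyEval hA lam), neg_zero]
  obtain rfl : ΔA = skewPerturbation m lam x r := funext fun j => (hΔ j).trans (smul_neg _ _).symm
  have hsol := polyEval_skewPerturbation_mulVec (m := m) hx hxr lam
  have hskew := skewPerturbation_mem_skewSymPoly (m := m) (x := x) (r := r) lam
  have hF := eta_polyNormF_univ (A := A) hx hr
  have hFS := eta_polyNormF_skewSymPoly_of_mem hx hr hskew hsol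
    (polyNormF_skewPerturbation hx hxr lam)
  have h2 (S) (hS : skewPerturbation m lam x r ∈ S) :=
    eta_polyNorm2_of_mem hx hr hS hsol (polyNorm2_skewPerturbation hx hxr lam)
  refine ⟨by rw [hFS, hF, mul_div_assoc], by rw [h2 _ hskew, h2 Set.univ trivial],
    h2 Set.univ trivial, hskew, ?_, by rw [hFS, polyNormF_skewPerturbation hx hxr],
    by rw [h2 _ hskew, polyNorm2_skewPerturbation hx hxr]⟩
  rw [add_mulVec, hsol, hr, add_neg_cancel]

/-- Structured backward errors of an approximate eigenpair of a
skew-symmetric matrix polynomial: `η_F^S = √2·η`, `η_2^S = η = ‖r‖₂/‖Λ_m‖₂`, and the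
explicitly given skew-symmetric perturbation attains both. -/
theorem skewsymmetric_backward_error {n m : ℕ}
    (A : Fin (m+1) → Matrix (Fin n) (Fin n) ℂ)
    (hA : A ∈ SkewSymPoly) (hreg : Regular A)
    (lam : ℂ) (x : Fin n → ℂ) (hx : star x ⬝ᵥ x = 1)
    (r : Fin n → ℂ) (hr : r = -(polyEval A lam *ᵥ x))
    (ΔA : Fin (m+1) → Matrix (Fin n) (Fin n) ℂ)
    (hΔ : ∀ j : Fin (m+1),
      ΔA j = -((conj (lam ^ (j : ℕ)) / (lamNormSq m lam : ℂ)) •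
        (vecMulVec (star x) r - vecMulVec r (star x)))) :
    eta polyNormF SkewSymPoly lam x A = Real.sqrt 2 * eta polyNormF Set.univ lam x A ∧
    eta polyNorm2 SkewSymPoly lam x A = eta polyNorm2 Set.univ lam x A ∧
    eta polyNorm2 Set.univ lam x A = vecNorm r / Real.sqrt (lamNormSq m lam) ∧
    ΔA ∈ SkewSymPoly ∧
    (polyEval A lam + polyEval ΔA lam) *ᵥ x = 0 ∧
    polyNormF ΔA = eta polyNormF SkewSymPoly lam x A ∧
    polyNorm2 ΔA = eta polyNorm2 SkewSymPoly lam x A :=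
  skewsymmetric_backward_error_general A hA lam x hx r hr ΔA hΔ
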